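/- (Lemma: preserving Lagrangian submanifolds characterizes conformally symplectic embeddings.) Let n ≥ 2, let U ⊆ E be open and connected, and let φ : U → E be a smooth embedding. Then the following are equivalent: (1) there exists a nonzero real constant c such that ω₀(Dφ_p u, Dφ_p v) = c · ω₀(u, v) for all p ∈ U and u, v ∈ E (φ is conformally symplectic); (2) for every closed smooth n-manifold L and every Lagrangian embedding ι : L → E with ι(L) ⊆ U, the composition φ ∘ ι : L → E is a Lagrangian embedding. -/

import Mathlib

open scoped Manifold

/-- `E n` is `ℝ^{2n}`, identified with `(Fin n → ℝ) × (Fin n → ℝ)`. -/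
abbrev E (n : ℕ) := (Fin n → ℝ) × (Fin n → ℝ)

/-- The standard symplectic form `ω₀` on `E n`. -/
def omega0 {n : ℕ} (u v : E n) : ℝ := ∑ i, (u.1 i * v.2 i - u.2 i * v.1 i)

/-- `φ` is a smooth embedding of the open set `U ⊆ E n` into `E n`. -/
def SmoothEmbeddingOn {n : ℕ} (φ : E n → E n) (U : Set (E n)) : Prop :=
  ContDiffOn ℝ (⊤ : ℕ∞) φ U ∧ Set.InjOn φ U ∧
    ∀ p ∈ U, Function.Injective (fderiv ℝ φ p)

/-- A `C^∞` map `ι : L → E n` from a manifold modeled on `EuclideanSpace ℝ (Fin n)` is a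
Lagrangian embedding if it is injective, immersive, and `ω₀` vanishes on the image of
each of its manifold derivatives. -/
def IsLagrangianEmbedding {n : ℕ} {L : Type} [TopologicalSpace L]
    [ChartedSpace (EuclideanSpace ℝ (Fin n)) L] (ι : L → E n) : Prop :=
  ContMDiff (𝓡 n) 𝓘(ℝ, E n) (⊤ : ℕ∞) ι ∧ Function.Injective ι ∧
    (∀ x : L, Function.Injective (mfderiv (𝓡 n) 𝓘(ℝ, E n) ι x)) ∧
    ∀ (x : L) (u v : TangentSpace (𝓡 n) x),
      omega0 (mfderiv (𝓡 n) 𝓘(ℝ, E n) ι x u) (mfderiv (𝓡 n) 𝓘(ℝ, E n) ι x v) = 0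

/-- A closed smooth `n`-manifold: a compact, connected `C^∞` manifold without boundary
modeled on `EuclideanSpace ℝ (Fin n)`. -/
structure ClosedManifold (n : ℕ) where
  carrier : Type
  [top : TopologicalSpace carrier]
  [charted : ChartedSpace (EuclideanSpace ℝ (Fin n)) carrier]
  [smooth : IsManifold (𝓡 n) (⊤ : ℕ∞) carrier]
  [cpt : CompactSpace carrier]
  [conn : ConnectedSpace carrier]

attribute [instance] ClosedManifold.top ClosedManifold.charted ClosedManifold.smooth
  ClosedManifold.cpt ClosedManifold.conn

/-!
(⇒) is the chain rule. For (⇐), fix `p ∈ U` and a linear symplectic map `A`. Small copies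
`p + r A (T - x)` of the Clifford torus `T = (S¹)ⁿ ⊆ ℂⁿ` are Lagrangian, so `Dφ_p` maps the
`A`-image of every tangent plane of `T` to an isotropic plane. Taking `A = id` at points of `T`
whose tangent planes are spanned by coordinate vectors, and `A` a symplectic transvection, this
forces `φ^*ω₀ = c(p) ω₀` at `p`. As `φ^*ω₀` is closed, `dc ∧ ω₀ = 0`, which for `n ≥ 2` gives
`dc = 0`; so `c` is constant on the connected set `U`, and `c ≠ 0` because `Dφ_p` is invertible.
-/

noncomputable section

open Real Topology

section LinearAlgebra

variable {n : ℕ}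

lemma omega0_add_left (u u' v : E n) : omega0 (u + u') v = omega0 u v + omega0 u' v := by
  simp only [omega0, ← Finset.sum_add_distrib, Prod.fst_add, Prod.snd_add, Pi.add_apply]
  exact Finset.sum_congr rfl fun _ _ => by ring

lemma omega0_add_right (u v v' : E n) : omega0 u (v + v') = omega0 u v + omega0 u v' := by
  simp only [omega0, ← Finset.sum_add_distrib, Prod.fst_add, Prod.snd_add, Pi.add_apply]
  exact Finset.sum_congr rfl fun _ _ => by ring

lemma omega0_smul_left (c : ℝ) (u v : E n) : omega0 (c • u) v = c * omega0 u v := by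
  simp only [omega0, Finset.mul_sum, Prod.smul_fst, Prod.smul_snd, Pi.smul_apply, smul_eq_mul]
  exact Finset.sum_congr rfl fun _ _ => by ring

lemma omega0_smul_right (c : ℝ) (u v : E n) : omega0 u (c • v) = c * omega0 u v := by
  simp only [omega0, Finset.mul_sum, Prod.smul_fst, Prod.smul_snd, Pi.smul_apply, smul_eq_mul]
  exact Finset.sum_congr rfl fun _ _ => by ring

lemma omega0_swap (u v : E n) : omega0 v u = -omega0 u v := by
  simp only [omega0, ← Finset.sum_neg_distrib]
  exact Finset.sum_congr rfl fun _ _ => by ring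

@[simp] lemma omega0_self (u : E n) : omega0 u u = 0 := by
  simpa [CharZero.eq_neg_self_iff] using omega0_swap u u

variable (n) in
def omega0Form : E n →ₗ[ℝ] E n →ₗ[ℝ] ℝ :=
  LinearMap.mk₂ ℝ omega0 omega0_add_left omega0_smul_left omega0_add_right omega0_smul_right

variable (n) in
def omega0Bilin : E n →L[ℝ] E n →L[ℝ] ℝ :=
  LinearMap.toContinuousLinearMap (LinearMap.toContinuousLinearMap.toLinearMap ∘ₗ omega0Form n)

@[simp] lemma omega0Form_apply (u v : E n) : omega0Form n u v = omega0 u v := rfl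

@[simp] lemma omega0Bilin_apply (u v : E n) : omega0Bilin n u v = omega0 u v := rfl

def unitQ (i : Fin n) : E n := (Pi.single i 1, 0)

def unitP (i : Fin n) : E n := (0, Pi.single i 1)

@[simp] lemma omega0_unitQ_right (u : E n) (i : Fin n) : omega0 u (unitQ i) = -u.2 i := by
  simp [omega0, unitQ, Pi.single_apply]

@[simp] lemma omega0_unitP_right (u : E n) (i : Fin n) : omega0 u (unitP i) = u.1 i := by
  simp [omega0, unitP, Pi.single_apply]

@[simp] lemma unitQ_fst (i : Fin n) : (unitQ i).1 = Pi.single i 1 := rfl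
@[simp] lemma unitQ_snd (i : Fin n) : (unitQ i).2 = 0 := rfl
@[simp] lemma unitP_fst (i : Fin n) : (unitP i).1 = 0 := rfl
@[simp] lemma unitP_snd (i : Fin n) : (unitP i).2 = Pi.single i 1 := rfl

lemma eq_zero_of_forall_omega0_eq_zero {u : E n} (h : ∀ v, omega0 u v = 0) : u = 0 := by
  ext i
  · simpa using h (unitP i)
  · simpa using h (unitQ i)

variable (n) in
def symplecticBasis : Module.Basis (Fin n ⊕ Fin n) ℝ (E n) :=
  (Pi.basisFun ℝ (Fin n)).prod (Pi.basisFun ℝ (Fin n))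

@[simp] lemma symplecticBasis_inl (i : Fin n) : symplecticBasis n (.inl i) = unitQ i :=
  Prod.ext (by simp [symplecticBasis]) (by simp [symplecticBasis])

@[simp] lemma symplecticBasis_inr (i : Fin n) : symplecticBasis n (.inr i) = unitP i :=
  Prod.ext (by simp [symplecticBasis]) (by simp [symplecticBasis])

def IsSymplecticMap (A : E n →L[ℝ] E n) : Prop :=
  ∀ u v, omega0 (A u) (A v) = omega0 u v

lemma IsSymplecticMap.injective {A : E n →L[ℝ] E n} (hA : IsSymplecticMap A) :
    Function.Injective A := by
  refine (injective_iff_map_eq_zero A).2 fun u hu => eq_zero_of_forall_omega0_eq_zero fun v => ?_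
  rw [← hA, hu]
  simp [omega0]

def symplecticTransvection (a : E n) : E n →L[ℝ] E n :=
  ContinuousLinearMap.id ℝ (E n) + ((omega0Bilin n).flip a).smulRight a

@[simp] lemma symplecticTransvection_apply (a u : E n) :
    symplecticTransvection a u = u + omega0 u a • a := rfl

lemma isSymplecticMap_symplecticTransvection (a : E n) :
    IsSymplecticMap (symplecticTransvection a) := by
  intro u v
  simp only [symplecticTransvection_apply, omega0_add_left, omega0_add_right, omega0_smul_left,
    omega0_smul_right, omega0_self, omega0_swap a u, omega0_swap a v]
  ring

end LinearAlgebra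

instance : Fact (0 < 2 * π) := ⟨two_pi_pos⟩

abbrev Torus (n : ℕ) := Fin n → AddCircle (2 * π)

-- `Real.Angle` is `AddCircle (2 * π)` only up to unfolding, which `rw` and `simp` do not do.
def angleCos (θ : AddCircle (2 * π)) : ℝ := Angle.cos θ

def angleSin (θ : AddCircle (2 * π)) : ℝ := Angle.sin θ

@[simp] lemma angleCos_coe (t : ℝ) : angleCos t = cos t := Angle.cos_coe t

@[simp] lemma angleSin_coe (t : ℝ) : angleSin t = sin t := Angle.sin_coe t

section CliffordFrame

variable {n : ℕ}

def cliffordFrame (x : Torus n) : EuclideanSpace ℝ (Fin n) →L[ℝ] E n :=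
  (ContinuousLinearMap.pi fun i => -angleSin (x i) • EuclideanSpace.proj i).prod
    (ContinuousLinearMap.pi fun i => angleCos (x i) • EuclideanSpace.proj i)

lemma cliffordFrame_apply (x : Torus n) (v : EuclideanSpace ℝ (Fin n)) :
    cliffordFrame x v = (fun i => -angleSin (x i) * v i, fun i => angleCos (x i) * v i) := rfl

lemma cliffordFrame_single (x : Torus n) (i : Fin n) :
    cliffordFrame x (EuclideanSpace.single i 1) =
      -angleSin (x i) • unitQ i + angleCos (x i) • unitP i := by
  ext j <;> by_cases h : j = i <;> simp [cliffordFrame_apply, h]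

lemma omega0_cliffordFrame (x : Torus n) (v w : EuclideanSpace ℝ (Fin n)) :
    omega0 (cliffordFrame x v) (cliffordFrame x w) = 0 :=
  Finset.sum_eq_zero fun i _ => by simp only [cliffordFrame_apply]; ring

lemma cliffordFrame_injective (x : Torus n) : Function.Injective (cliffordFrame x) := by
  intro v w h
  ext i
  have hsin : -angleSin (x i) * v i = -angleSin (x i) * w i := congrFun (congrArg Prod.fst h) i
  have hcos : angleCos (x i) * v i = angleCos (x i) * w i := congrFun (congrArg Prod.snd h) i
  have hpyth : angleCos (x i) ^ 2 + angleSin (x i) ^ 2 = 1 := Angle.cos_sq_add_sin_sq (x i)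
  linear_combination angleCos (x i) * hcos - angleSin (x i) * hsin - (v i - w i) * hpyth

lemma cliffordFrame_single_eq_unitQ {x : Torus n} {i : Fin n} (h : x i = ↑(-(π / 2))) :
    cliffordFrame x (EuclideanSpace.single i 1) = unitQ i := by
  rw [cliffordFrame_single, h, angleSin_coe, angleCos_coe]
  simp

lemma cliffordFrame_single_eq_unitP {x : Torus n} {i : Fin n} (h : x i = ↑(0 : ℝ)) :
    cliffordFrame x (EuclideanSpace.single i 1) = unitP i := by
  rw [cliffordFrame_single, h, angleSin_coe, angleCos_coe]
  simp

theorem omega0_map_eq_mul_omega0_of_isotropic (D : E n →L[ℝ] E n)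
    (hD : ∀ A, IsSymplecticMap A → ∀ (x : Torus n) (v w : EuclideanSpace ℝ (Fin n)),
      omega0 (D (A (cliffordFrame x v))) (D (A (cliffordFrame x w))) = 0)
    (k : Fin n) (u v : E n) :
    omega0 (D u) (D v) = omega0 (D (unitQ k)) (D (unitP k)) * omega0 u v := by
  set B : E n →ₗ[ℝ] E n →ₗ[ℝ] ℝ := (omega0Form n).compl₁₂ D.toLinearMap D.toLinearMap
  have hBswap : ∀ a b, B b a = -B a b := fun a b => omega0_swap _ _
  have hiso (A) (hA : IsSymplecticMap A) (x : Torus n) (i j : Fin n) :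
      B (A (cliffordFrame x (.single i 1))) (A (cliffordFrame x (.single j 1))) = 0 :=
    hD A hA x _ _
  have hid (x : Torus n) (i j : Fin n) :
      B (cliffordFrame x (.single i 1)) (cliffordFrame x (.single j 1)) = 0 :=
    hiso (ContinuousLinearMap.id ℝ (E n)) (fun _ _ => rfl) x i j
  set xQ : Torus n := fun _ => ↑(-(π / 2))
  set xP : Torus n := fun _ => ↑(0 : ℝ)
  have hQQ (i j) : B (unitQ i) (unitQ j) = 0 := by
    simpa only [cliffordFrame_single_eq_unitQ (x := xQ) rfl] using hid xQ i j
  have hPP (i j) : B (unitP i) (unitP j) = 0 := by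
    simpa only [cliffordFrame_single_eq_unitP (x := xP) rfl] using hid xP i j
  have hQP (i j) (hij : i ≠ j) : B (unitQ i) (unitP j) = 0 := by
    have h := hid (Function.update xP i ↑(-(π / 2))) i j
    rwa [cliffordFrame_single_eq_unitQ (Function.update_self ..),
      cliffordFrame_single_eq_unitP (Function.update_of_ne hij.symm ..)] at h
  have hdiag (i j) : B (unitQ i) (unitP i) = B (unitQ j) (unitP j) := by
    rcases eq_or_ne i j with rfl | hij
    · rfl
    -- The transvection maps `Q i, Q j` to `Q i + P i + P j, Q j + P i + P j`, whose `B`-pairing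
    -- is `B (Q i) (P i) - B (Q j) (P j)`.
    have h := hiso _ (isSymplecticMap_symplecticTransvection (unitP i + unitP j)) xQ i j
    rw [cliffordFrame_single_eq_unitQ (x := xQ) rfl,
      cliffordFrame_single_eq_unitQ (x := xQ) rfl] at h
    simp only [symplecticTransvection_apply, omega0_add_right, omega0_unitP_right, unitQ_fst,
      Pi.single_eq_same, Pi.single_eq_of_ne hij, Pi.single_eq_of_ne hij.symm, add_zero,
      zero_add, one_smul, map_add, LinearMap.add_apply] at h
    linarith [hQQ i j, hPP i i, hPP j i, hPP i j, hPP j j, hBswap (unitQ j) (unitP i),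
      hBswap (unitQ j) (unitP j), hQP j i hij.symm, hQP i j hij]
  have hext : B = B (unitQ k) (unitP k) • omega0Form n := by
    refine LinearMap.ext_basis (symplecticBasis n) (symplecticBasis n) ?_
    rintro (i | i) (j | j) <;>
      simp only [symplecticBasis_inl, symplecticBasis_inr, LinearMap.smul_apply, omega0Form_apply,
        smul_eq_mul]
    · simp [hQQ]
    · rcases eq_or_ne i j with rfl | hij
      · simp [hdiag i k]
      · simp [hQP i j hij, hij.symm]
    · rcases eq_or_ne i j with rfl | hij
      · simp [hBswap (unitQ i), hdiag i k]
      · simp [hBswap (unitQ j), hQP j i hij.symm, hij]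
    · simp [hPP]
  exact congr($hext u v)

end CliffordFrame

section ConformalFactor

variable {n : ℕ}

lemma eq_zero_of_cyclic_omega0 (hn : 2 ≤ n) {C : E n → ℝ}
    (h : ∀ u v w, omega0 u v * C w + omega0 v w * C u + omega0 w u * C v = 0) : C = 0 := by
  have : Nontrivial (Fin n) := Fin.nontrivial_iff_two_le.2 hn
  obtain ⟨i, j, hij⟩ := exists_pair_ne (Fin n)
  have hQ : C (unitQ i) = 0 := by
    simpa [Pi.single_apply, hij, hij.symm] using h (unitQ j) (unitP j) (unitQ i)
  have hP : C (unitP i) = 0 := by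
    simpa [Pi.single_apply, hij, hij.symm] using h (unitQ j) (unitP j) (unitP i)
  funext w
  simpa [hQ, hP] using h (unitQ i) (unitP i) w

lemma differentiableAt_omega0_fderiv {φ : E n → E n} {p : E n} (hφ : ContDiffAt ℝ 2 φ p)
    (u v : E n) : DifferentiableAt ℝ (fun q => omega0 (fderiv ℝ φ q u) (fderiv ℝ φ q v)) p := by
  have hD := (hφ.fderiv_right (m := 1) le_rfl).differentiableAt one_ne_zero
  exact ((omega0Bilin n).hasFDerivAt_of_bilinear
    (hD.clm_apply (differentiableAt_const u)).hasFDerivAt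
    (hD.clm_apply (differentiableAt_const v)).hasFDerivAt).differentiableAt

theorem fderiv_eq_zero_of_conformal (hn : 2 ≤ n) {φ : E n → E n} {c : E n → ℝ} {p : E n}
    (hφ : ContDiffAt ℝ 2 φ p) (hc : DifferentiableAt ℝ c p)
    (hconf : ∀ᶠ q in 𝓝 p, ∀ u v,
      omega0 (fderiv ℝ φ q u) (fderiv ℝ φ q v) = c q * omega0 u v) :
    fderiv ℝ c p = 0 := by
  set L := fderiv ℝ φ p
  set D2 := fderiv ℝ (fderiv ℝ φ) p
  have hD2 : HasFDerivAt (fderiv ℝ φ) D2 p :=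
    ((hφ.fderiv_right (m := 1) le_rfl).differentiableAt one_ne_zero).hasFDerivAt
  have hsymm : ∀ v w, D2 v w = D2 w v := hφ.isSymmSndFDerivAt (by simp)
  have hderiv (u v w : E n) :
      omega0 (D2 w u) (L v) + omega0 (L u) (D2 w v) = omega0 u v * fderiv ℝ c p w := by
    have hlhs := (omega0Bilin n).hasFDerivAt_of_bilinear
      (hD2.clm_apply (hasFDerivAt_const u p)) (hD2.clm_apply (hasFDerivAt_const v p))
    have hrhs := (hc.hasFDerivAt.mul_const (omega0 u v)).congr_of_eventuallyEq
      (hconf.mono fun q hq => hq u v)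
    have := congr($(hlhs.unique hrhs) w)
    simpa [add_comm, mul_comm] using this
  suffices ⇑(fderiv ℝ c p) = 0 from ContinuousLinearMap.ext (congrFun this)
  -- The cyclic sum of the left-hand sides of `hderiv` vanishes, i.e. `d (φ^* ω₀) = 0`.
  refine eq_zero_of_cyclic_omega0 hn fun u v w => ?_
  have h₁ := hderiv u v w
  have h₂ := hderiv v w u
  have h₃ := hderiv w u v
  rw [hsymm u w, omega0_swap _ (L v)] at h₂
  rw [hsymm v u, omega0_swap _ (L w)] at h₃
  rw [hsymm w v, omega0_swap _ (L u)] at h₁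
  linarith

end ConformalFactor

lemma AddCircle.eventually_eq_of_coe_eq_zero {p : ℝ} (hp : 0 < p) {X : Type*} [TopologicalSpace X]
    {f : X → ℝ} {x₀ : X} (hf : ContinuousAt f x₀) (h : ∀ᶠ x in 𝓝 x₀, (f x : AddCircle p) = 0) :
    ∀ᶠ x in 𝓝 x₀, f x = f x₀ := by
  have hclose : ∀ᶠ x in 𝓝 x₀, |f x - f x₀| < p :=
    (Metric.tendsto_nhds.1 hf _ hp).mono fun _ hx => hx
  filter_upwards [h, hclose] with x hx hxc
  obtain ⟨k, hk⟩ := (AddCircle.coe_eq_zero_iff p).1 (by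
    rw [AddCircle.coe_sub, hx, h.self_of_nhds, sub_zero] : ((f x - f x₀ : ℝ) : AddCircle p) = 0)
  rw [← hk, zsmul_eq_mul, abs_mul, abs_of_pos hp, mul_lt_iff_lt_one_left hp, ← Int.cast_abs,
    ← Int.cast_one, Int.cast_lt, Int.abs_lt_one_iff] at hxc
  rw [← sub_eq_zero, ← hk, hxc, zero_smul]

namespace Torus

variable {n : ℕ}

def chart (a : Fin n → ℝ) : OpenPartialHomeomorph (Torus n) (EuclideanSpace ℝ (Fin n)) :=
  (OpenPartialHomeomorph.pi fun i =>
      (AddCircle.openPartialHomeomorphCoe (2 * π) (a i)).symm).transHomeomorph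
    (EuclideanSpace.equiv (Fin n) ℝ).symm.toHomeomorph

lemma chart_symm_apply (a : Fin n → ℝ) (θ : EuclideanSpace ℝ (Fin n)) :
    (chart a).symm θ = fun i => (θ i : AddCircle (2 * π)) := rfl

lemma coe_chart_apply (a : Fin n → ℝ) (z : Torus n) (i : Fin n) :
    ((chart a z i : ℝ) : AddCircle (2 * π)) = z i :=
  (AddCircle.equivIco (2 * π) (a i)).symm_apply_apply (z i)

lemma chart_source (a : Fin n → ℝ) :
    (chart a).source = Set.univ.pi fun i => {((a i : ℝ) : AddCircle (2 * π))}ᶜ := rfl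

def antipodeLift (x : Torus n) (i : Fin n) : ℝ := (x i).out + π

lemma mem_chart_antipodeLift_source (x : Torus n) : x ∈ (chart (antipodeLift x)).source := by
  rw [chart_source]
  intro i _ h
  have : ((π : ℝ) : AddCircle (2 * π)) = 0 := by
    simpa [antipodeLift] using congrArg (· - x i) h.symm
  exact pi_ne_zero ((AddCircle.coe_eq_zero_iff_of_mem_Ico ⟨pi_pos.le, by linarith [pi_pos]⟩).1 this)

instance : ChartedSpace (EuclideanSpace ℝ (Fin n)) (Torus n) where
  atlas := Set.range chart
  chartAt x := chart (antipodeLift x)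
  mem_chart_source := mem_chart_antipodeLift_source
  chart_mem_atlas _ := ⟨_, rfl⟩

lemma contDiffOn_of_coe_eq {s : Set (EuclideanSpace ℝ (Fin n))} (hs : IsOpen s)
    {f : EuclideanSpace ℝ (Fin n) → EuclideanSpace ℝ (Fin n)} (hf : ContinuousOn f s)
    (hcoe : ∀ θ ∈ s, ∀ i, ((f θ i : ℝ) : AddCircle (2 * π)) = θ i) :
    ContDiffOn ℝ (⊤ : ℕ∞) f s := by
  intro θ₀ hθ₀
  have hcoord (i : Fin n) : ∀ᶠ θ in 𝓝 θ₀, f θ i - θ i = f θ₀ i - θ₀ i := by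
    refine AddCircle.eventually_eq_of_coe_eq_zero two_pi_pos ?_ ?_
    · exact ((EuclideanSpace.proj i).continuous.continuousAt.comp
        (hf.continuousAt (hs.mem_nhds hθ₀))).sub (EuclideanSpace.proj i).continuous.continuousAt
    · filter_upwards [hs.mem_nhds hθ₀] with θ hθ
      rw [AddCircle.coe_sub, hcoe θ hθ, sub_self]
  have htrans : f =ᶠ[𝓝 θ₀] fun θ => θ + (f θ₀ - θ₀) := by
    filter_upwards [Filter.eventually_all.2 hcoord] with θ hθ
    ext i
    simp [← hθ i]
  exact ((contDiff_id.add contDiff_const).contDiffAt.congr_of_eventuallyEq htrans).contDiffWithinAt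

instance : IsManifold (𝓡 n) (⊤ : ℕ∞) (Torus n) := by
  apply isManifold_of_contDiffOn
  rintro _ _ ⟨a, rfl⟩ ⟨b, rfl⟩
  simp only [modelWithCornersSelf_coe, modelWithCornersSelf_coe_symm, Function.comp_id,
    Function.id_comp, Set.preimage_id, Set.range_id, Set.inter_univ]
  exact contDiffOn_of_coe_eq (OpenPartialHomeomorph.open_source _)
    (OpenPartialHomeomorph.continuousOn _) fun θ _ i => coe_chart_apply b _ i

lemma continuousAt_of_comp_coe {X : Type*} [TopologicalSpace X] {f : Torus n → X}
    {g : EuclideanSpace ℝ (Fin n) → X} (hfg : ∀ θ : EuclideanSpace ℝ (Fin n), f (θ ·) = g θ)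
    {x : Torus n} (hg : ContinuousAt g (chartAt (EuclideanSpace ℝ (Fin n)) x x)) :
    ContinuousAt f x := by
  refine (hg.comp ((chartAt _ x).continuousAt (mem_chart_source _ x))).congr ?_
  filter_upwards [(chartAt (EuclideanSpace ℝ (Fin n)) x).open_source.mem_nhds
    (mem_chart_source _ x)] with z hz
  rw [Function.comp_apply, ← hfg, ← chart_symm_apply (antipodeLift x)]
  exact congrArg f ((chartAt _ x).left_inv hz)

section LiftedMaps

variable {F : Type*} [NormedAddCommGroup F] [NormedSpace ℝ F] {f : Torus n → F}
  {g : EuclideanSpace ℝ (Fin n) → F}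

lemma writtenInExtChartAt_eq_of_comp_coe (hfg : ∀ θ : EuclideanSpace ℝ (Fin n), f (θ ·) = g θ)
    (x : Torus n) : writtenInExtChartAt (𝓡 n) 𝓘(ℝ, F) x f = g :=
  funext hfg

lemma hasMFDerivAt_of_comp_coe (hfg : ∀ θ : EuclideanSpace ℝ (Fin n), f (θ ·) = g θ)
    {x : Torus n} {g' : EuclideanSpace ℝ (Fin n) →L[ℝ] F}
    (hg : HasFDerivAt g g' (chartAt (EuclideanSpace ℝ (Fin n)) x x)) :
    HasMFDerivAt (𝓡 n) 𝓘(ℝ, F) f x g' := by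
  refine ⟨continuousAt_of_comp_coe hfg hg.continuousAt, ?_⟩
  rw [writtenInExtChartAt_eq_of_comp_coe hfg, ModelWithCorners.range_eq_univ]
  exact hg.hasFDerivWithinAt

lemma contMDiff_of_comp_coe (hfg : ∀ θ : EuclideanSpace ℝ (Fin n), f (θ ·) = g θ)
    (hg : ContDiff ℝ (⊤ : ℕ∞) g) : ContMDiff (𝓡 n) 𝓘(ℝ, F) (⊤ : ℕ∞) f := fun x => by
  rw [contMDiffAt_iff]
  refine ⟨continuousAt_of_comp_coe hfg hg.continuous.continuousAt, ?_⟩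
  change ContDiffWithinAt ℝ _ (writtenInExtChartAt (𝓡 n) 𝓘(ℝ, F) x f) _ _
  rw [writtenInExtChartAt_eq_of_comp_coe hfg]
  exact hg.contDiffWithinAt

end LiftedMaps

end Torus

section LagrangianTorus

variable {n : ℕ}

def clifford (z : Torus n) : E n := (fun i => angleCos (z i), fun i => angleSin (z i))

lemma clifford_coe (θ : EuclideanSpace ℝ (Fin n)) :
    clifford (θ ·) = (fun i => cos (θ i), fun i => sin (θ i)) := by
  simp [clifford]

lemma hasFDerivAt_clifford_coe (θ : EuclideanSpace ℝ (Fin n)) :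
    HasFDerivAt (fun θ : EuclideanSpace ℝ (Fin n) => clifford (θ ·)) (cliffordFrame (θ ·)) θ := by
  simp_rw [clifford_coe]
  refine HasFDerivAt.prodMk (hasFDerivAt_pi'.2 fun i => ?_) (hasFDerivAt_pi'.2 fun i => ?_)
  · exact (hasDerivAt_cos (θ i)).comp_hasFDerivAt θ (EuclideanSpace.proj (𝕜 := ℝ) i).hasFDerivAt
  · exact (hasDerivAt_sin (θ i)).comp_hasFDerivAt θ (EuclideanSpace.proj (𝕜 := ℝ) i).hasFDerivAt

lemma contDiff_clifford_coe :
    ContDiff ℝ (⊤ : ℕ∞) fun θ : EuclideanSpace ℝ (Fin n) => clifford (θ ·) := by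
  simp_rw [clifford_coe]
  have hproj (i : Fin n) : ContDiff ℝ (⊤ : ℕ∞) fun θ : EuclideanSpace ℝ (Fin n) => θ i :=
    (EuclideanSpace.proj (𝕜 := ℝ) i).contDiff
  exact (contDiff_pi.2 fun i => contDiff_cos.comp (hproj i)).prodMk
    (contDiff_pi.2 fun i => contDiff_sin.comp (hproj i))

lemma eq_of_angleCos_eq_of_angleSin_eq {a b : AddCircle (2 * π)} (hcos : angleCos a = angleCos b)
    (hsin : angleSin a = angleSin b) : a = b := by
  induction a using QuotientAddGroup.induction_on with | H s =>
  induction b using QuotientAddGroup.induction_on with | H t =>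
  rw [angleCos_coe, angleCos_coe] at hcos
  rw [angleSin_coe, angleSin_coe] at hsin
  exact Angle.cos_sin_inj hcos hsin

lemma clifford_injective : Function.Injective (clifford (n := n)) := fun _ _ h =>
  funext fun i => eq_of_angleCos_eq_of_angleSin_eq (congrFun (congrArg Prod.fst h) i)
    (congrFun (congrArg Prod.snd h) i)

lemma norm_clifford_le (z : Torus n) : ‖clifford z‖ ≤ 1 := by
  have hbound (a : AddCircle (2 * π)) : |angleCos a| ≤ 1 ∧ |angleSin a| ≤ 1 := by
    induction a using QuotientAddGroup.induction_on with | H t =>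
    rw [angleCos_coe, angleSin_coe]
    exact ⟨abs_cos_le_one t, abs_sin_le_one t⟩
  refine max_le ?_ ?_ <;> refine (pi_norm_le_iff_of_nonneg zero_le_one).2 fun i => ?_
  · simpa [clifford] using (hbound (z i)).1
  · simpa [clifford] using (hbound (z i)).2

def lagrangianTorus (p : E n) (r : ℝ) (A : E n →L[ℝ] E n) (x₀ z : Torus n) : E n :=
  p + r • A (clifford z - clifford x₀)

variable {p : E n} {r : ℝ} {A : E n →L[ℝ] E n} {x₀ : Torus n}

lemma lagrangianTorus_self : lagrangianTorus p r A x₀ x₀ = p := by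
  simp [lagrangianTorus]

lemma norm_lagrangianTorus_sub_le (z : Torus n) :
    ‖lagrangianTorus p r A x₀ z - p‖ ≤ |r| * (2 * ‖A‖) := by
  rw [lagrangianTorus, add_sub_cancel_left, norm_smul, Real.norm_eq_abs]
  gcongr
  calc ‖A (clifford z - clifford x₀)‖ ≤ ‖A‖ * ‖clifford z - clifford x₀‖ := A.le_opNorm _
    _ ≤ ‖A‖ * 2 := by
      gcongr
      linarith [norm_sub_le (clifford z) (clifford x₀), norm_clifford_le z, norm_clifford_le x₀]
    _ = 2 * ‖A‖ := mul_comm _ _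

lemma hasMFDerivAt_lagrangianTorus (x : Torus n) :
    HasMFDerivAt (𝓡 n) 𝓘(ℝ, E n) (lagrangianTorus p r A x₀) x (r • A.comp (cliffordFrame x)) := by
  refine Torus.hasMFDerivAt_of_comp_coe (fun _ => rfl) ?_
  have hx : (fun i => ((chartAt (EuclideanSpace ℝ (Fin n)) x x i : ℝ) : AddCircle (2 * π))) = x :=
    funext (Torus.coe_chart_apply _ x)
  have := ((A.hasFDerivAt.comp _ ((hasFDerivAt_clifford_coe (chartAt _ x x)).sub_const
    (clifford x₀))).const_smul r).const_add p
  rwa [hx] at this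

lemma contMDiff_lagrangianTorus :
    ContMDiff (𝓡 n) 𝓘(ℝ, E n) (⊤ : ℕ∞) (lagrangianTorus p r A x₀) := by
  exact Torus.contMDiff_of_comp_coe (fun _ => rfl) <| contDiff_const.add <|
    (A.contDiff.comp (contDiff_clifford_coe.sub contDiff_const)).const_smul r

lemma isLagrangianEmbedding_lagrangianTorus (hr : r ≠ 0) (hA : IsSymplecticMap A) :
    IsLagrangianEmbedding (lagrangianTorus p r A x₀) := by
  refine ⟨contMDiff_lagrangianTorus, ?_, fun x => ?_, fun x u v => ?_⟩
  · exact (add_right_injective p).comp <| (smul_right_injective _ hr).comp <|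
      hA.injective.comp <| (sub_left_injective (b := clifford x₀)).comp clifford_injective
  · rw [(hasMFDerivAt_lagrangianTorus x).mfderiv]
    exact (smul_right_injective _ hr).comp (hA.injective.comp (cliffordFrame_injective x))
  · rw [(hasMFDerivAt_lagrangianTorus x).mfderiv]
    change omega0 (r • A (cliffordFrame x u)) (r • A (cliffordFrame x v)) = 0
    rw [omega0_smul_left, omega0_smul_right, hA, omega0_cliffordFrame x u v, mul_zero, mul_zero]

end LagrangianTorus

section Main

variable {n : ℕ}

def PreservesLagrangianEmbeddings (U : Set (E n)) (φ : E n → E n) : Prop :=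
  ∀ (L : Type) [TopologicalSpace L] [ChartedSpace (EuclideanSpace ℝ (Fin n)) L]
    [IsManifold (𝓡 n) (⊤ : ℕ∞) L] [CompactSpace L] [ConnectedSpace L]
    (ι : L → E n), IsLagrangianEmbedding ι → Set.range ι ⊆ U → IsLagrangianEmbedding (φ ∘ ι)

lemma IsLagrangianEmbedding.comp_of_conformal {L : Type} [TopologicalSpace L]
    [ChartedSpace (EuclideanSpace ℝ (Fin n)) L] {U : Set (E n)} (hU : IsOpen U) {φ : E n → E n}
    (hφ : SmoothEmbeddingOn φ U) {c : ℝ}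
    (hconf : ∀ p ∈ U, ∀ u v, omega0 (fderiv ℝ φ p u) (fderiv ℝ φ p v) = c * omega0 u v)
    {ι : L → E n} (hι : IsLagrangianEmbedding ι) (hrange : Set.range ι ⊆ U) :
    IsLagrangianEmbedding (φ ∘ ι) := by
  obtain ⟨hιsmooth, hιinj, hιimm, hιlag⟩ := hι
  have hmem (x : L) : ι x ∈ U := hrange ⟨x, rfl⟩
  have hφdiff (x : L) : DifferentiableAt ℝ φ (ι x) :=
    (hφ.1.contDiffAt (hU.mem_nhds (hmem x))).differentiableAt (by simp)
  have hderiv (x : L) : mfderiv (𝓡 n) 𝓘(ℝ, E n) (φ ∘ ι) x =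
      (fderiv ℝ φ (ι x)).comp (mfderiv (𝓡 n) 𝓘(ℝ, E n) ι x) :=
    ((hφdiff x).hasFDerivAt.hasMFDerivAt.comp x
      (hιsmooth.mdifferentiableAt (by simp)).hasMFDerivAt).mfderiv
  refine ⟨(contMDiffOn_iff_contDiffOn.2 hφ.1).comp_contMDiff hιsmooth hmem,
    fun a b hab => hιinj (hφ.2.1 (hmem a) (hmem b) hab), fun x => ?_, fun x u v => ?_⟩
  · rw [hderiv]
    exact (hφ.2.2 _ (hmem x)).comp (hιimm x)
  · rw [hderiv]
    have h := hconf _ (hmem x) (mfderiv (𝓡 n) 𝓘(ℝ, E n) ι x u) (mfderiv (𝓡 n) 𝓘(ℝ, E n) ι x v)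
    rwa [hιlag, mul_zero] at h

lemma PreservesLagrangianEmbeddings.omega0_fderiv_cliffordFrame_eq_zero {U : Set (E n)}
    {φ : E n → E n}
    (H : PreservesLagrangianEmbeddings U φ) (hU : IsOpen U) {p : E n} (hp : p ∈ U)
    (hφ : DifferentiableAt ℝ φ p) {A : E n →L[ℝ] E n} (hA : IsSymplecticMap A) (x : Torus n)
    (v w : EuclideanSpace ℝ (Fin n)) :
    omega0 (fderiv ℝ φ p (A (cliffordFrame x v))) (fderiv ℝ φ p (A (cliffordFrame x w))) = 0 := by
  obtain ⟨ε, hε, hball⟩ := Metric.isOpen_iff.1 hU p hp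
  set r := ε / (2 * ‖A‖ + 1)
  have hr : 0 < r := by positivity
  have hrange : Set.range (lagrangianTorus p r A x) ⊆ U := by
    rintro _ ⟨z, rfl⟩
    refine hball (mem_ball_iff_norm.2 (norm_lagrangianTorus_sub_le z |>.trans_lt ?_))
    rw [abs_of_pos hr, div_mul_eq_mul_div, div_lt_iff₀ (by positivity)]
    linarith
  have hφ' : HasMFDerivAt 𝓘(ℝ, E n) 𝓘(ℝ, E n) φ (lagrangianTorus p r A x x) (fderiv ℝ φ p) := by
    rw [lagrangianTorus_self]
    exact hφ.hasFDerivAt.hasMFDerivAt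
  have h := (H (Torus n) _ (isLagrangianEmbedding_lagrangianTorus hr.ne' hA) hrange).2.2.2 x v w
  rw [(hφ'.comp x (hasMFDerivAt_lagrangianTorus x)).mfderiv] at h
  change omega0 (fderiv ℝ φ p (r • A (cliffordFrame x v)))
    (fderiv ℝ φ p (r • A (cliffordFrame x w))) = 0 at h
  simpa [omega0_smul_left, omega0_smul_right, hr.ne'] using h

lemma PreservesLagrangianEmbeddings.omega0_fderiv_eq_mul {U : Set (E n)} {φ : E n → E n}
    (H : PreservesLagrangianEmbeddings U φ) (hU : IsOpen U) {p : E n} (hp : p ∈ U)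
    (hφ : DifferentiableAt ℝ φ p) (k : Fin n) (u v : E n) :
    omega0 (fderiv ℝ φ p u) (fderiv ℝ φ p v) =
      omega0 (fderiv ℝ φ p (unitQ k)) (fderiv ℝ φ p (unitP k)) * omega0 u v :=
  omega0_map_eq_mul_omega0_of_isotropic _
    (fun _ hA => H.omega0_fderiv_cliffordFrame_eq_zero hU hp hφ hA) k u v

lemma ne_zero_of_omega0_map_eq_mul {D : E n →L[ℝ] E n} (hD : Function.Injective D) {c : ℝ}
    (hc : ∀ u v, omega0 (D u) (D v) = c * omega0 u v) (k : Fin n) : c ≠ 0 := by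
  rintro rfl
  have hsurj : Function.Surjective D := LinearMap.injective_iff_surjective.1 hD
  obtain ⟨u, hu⟩ := hsurj (unitQ k)
  obtain ⟨v, hv⟩ := hsurj (unitP k)
  simpa [hu, hv] using hc u v

end Main

end

/-- An embedding of a connected open subset of `ℝ^{2n}` (with `n ≥ 2`) is conformally
symplectic if and only if it maps every embedded Lagrangian submanifold (i.e. the image of
every Lagrangian embedding of a closed smooth `n`-manifold) contained in its domain to a
Lagrangian submanifold. -/
theorem conformally_symplectic_iff_preserves_lagrangians
    (n : ℕ) (hn : 2 ≤ n) (U : Set (E n)) (hUopen : IsOpen U) (hUconn : IsConnected U)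
    (φ : E n → E n) (hφ : SmoothEmbeddingOn φ U) :
    (∃ c : ℝ, c ≠ 0 ∧ ∀ p ∈ U, ∀ u v : E n,
        omega0 (fderiv ℝ φ p u) (fderiv ℝ φ p v) = c * omega0 u v) ↔
    (∀ (L : Type) [TopologicalSpace L] [ChartedSpace (EuclideanSpace ℝ (Fin n)) L]
        [IsManifold (𝓡 n) (⊤ : ℕ∞) L] [CompactSpace L] [ConnectedSpace L]
        (ι : L → E n), IsLagrangianEmbedding ι → Set.range ι ⊆ U →
        IsLagrangianEmbedding (φ ∘ ι)) := by
  refine ⟨fun ⟨c, _, hconf⟩ L _ _ _ _ _ ι hι hrange => hι.comp_of_conformal hUopen hφ hconf hrange,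
    fun H => ?_⟩
  replace H : PreservesLagrangianEmbeddings U φ := H
  have hC2 (p : E n) (hp : p ∈ U) : ContDiffAt ℝ 2 φ p :=
    (hφ.1.contDiffAt (hUopen.mem_nhds hp)).of_le (WithTop.coe_le_coe.2 le_top)
  let k : Fin n := ⟨0, by omega⟩
  set c : E n → ℝ := fun p => omega0 (fderiv ℝ φ p (unitQ k)) (fderiv ℝ φ p (unitP k))
  have hconf (p : E n) (hp : p ∈ U) (u v : E n) :
      omega0 (fderiv ℝ φ p u) (fderiv ℝ φ p v) = c p * omega0 u v :=
    H.omega0_fderiv_eq_mul hUopen hp ((hC2 p hp).differentiableAt two_ne_zero) k u v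
  have hc (p : E n) (hp : p ∈ U) : DifferentiableAt ℝ c p :=
    differentiableAt_omega0_fderiv (hC2 p hp) _ _
  obtain ⟨p₀, hp₀⟩ := hUconn.nonempty
  have hconst (p : E n) (hp : p ∈ U) : c p = c p₀ :=
    hUopen.is_const_of_fderiv_eq_zero hUconn.isPreconnected
      (fun q hq => (hc q hq).differentiableWithinAt)
      (fun q hq => fderiv_eq_zero_of_conformal hn (hC2 q hq) (hc q hq)
        (Filter.eventually_of_mem (hUopen.mem_nhds hq) (hconf ·))) hp hp₀
  exact ⟨c p₀, ne_zero_of_omega0_map_eq_mul (hφ.2.2 p₀ hp₀) (hconf p₀ hp₀) k,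
    fun p hp u v => by rw [hconf p hp, hconst p hp]⟩
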